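/- arXiv:1907.08247 — 2 statements merged into one kernel-verified Lean document; each statement's English description precedes it below -/
import Mathlib

section
/- For every n ≥ 2, neither (2^{n-1} + 2, 2^{n-1} − 2) nor (2^{n-1} − 2, 2^{n-1} + 2) occurs as the Parikh vector of a length-2^n factor of the paperfolding word. -/
/-- letter of the ordinary paperfolding word at position `m` (positions start at 1):
writing `m = k * 2^j` with `k` odd, the letter is `0` if `k ≡ 1 (mod 4)` and `1` otherwise. -/
def pf (m : ℕ) : ℕ := if (m / 2 ^ (padicValNat 2 m)) % 4 = 1 then 0 else 1

/-- the length-`n` factor of `w` starting at position `i`. -/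
def factorAt (w : ℕ → ℕ) (i n : ℕ) : List ℕ := (List.range n).map (fun j => w (i + j))

/-- `u` is a factor of the 1-indexed infinite word `w`. -/
def IsFactor (w : ℕ → ℕ) (u : List ℕ) : Prop := ∃ i ≥ 1, u = factorAt w i u.length

lemma pf_two_mul (m : ℕ) (hm : m ≠ 0) : pf (2 * m) = pf m := by
  have h2 : (2 : ℕ) ≠ 0 := by norm_num
  have hv : padicValNat 2 (2 * m) = 1 + padicValNat 2 m := by
    rw [padicValNat.mul h2 hm, padicValNat.self (by norm_num)]
  unfold pf
  rw [hv, pow_add, pow_one, Nat.mul_div_mul_left _ _ (by norm_num : 0 < 2)]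

lemma pf_odd (o : ℕ) (ho : o % 2 = 1) : pf o = if o % 4 = 1 then 0 else 1 := by
  have : padicValNat 2 o = 0 := by
    apply padicValNat.eq_zero_of_not_dvd
    omega
  unfold pf
  rw [this, pow_zero, Nat.div_one]

/-- indicator of a `0` letter of the paperfolding word. -/
def g (x : ℕ) : ℕ := if pf x = 0 then 1 else 0

lemma g_le_one (x : ℕ) : g x ≤ 1 := by unfold g; split <;> omega

lemma g_two_mul (m : ℕ) (hm : m ≠ 0) : g (2 * m) = g m := by
  unfold g; rw [pf_two_mul m hm]

lemma g_pair (o : ℕ) (ho : o % 2 = 1) : g o + g (o + 2) = 1 := by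
  have h1 := pf_odd o ho
  have h2 := pf_odd (o + 2) (by omega)
  have h4 : o % 4 = 1 ∨ o % 4 = 3 := by omega
  unfold g
  rcases h4 with h | h
  · rw [h1, h2, if_pos h, if_neg (by omega : ¬ (o + 2) % 4 = 1)]; simp
  · rw [h1, h2, if_neg (by omega : ¬ o % 4 = 1), if_pos (by omega : (o + 2) % 4 = 1)]; simp

/-- number of `0`s in the length-`N` window of the paperfolding word starting at `i`. -/
def Z (i N : ℕ) : ℕ := ∑ j ∈ Finset.range N, g (i + j)

lemma Z_two_mul (i N : ℕ) :
    Z i (2 * N) = ∑ t ∈ Finset.range N, (g (i + 2 * t) + g (i + 2 * t + 1)) := by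
  induction N with
  | zero => simp [Z]
  | succ N ih =>
    have h : 2 * (N + 1) = (2 * N) + 1 + 1 := by ring
    rw [Finset.sum_range_succ, ← ih, h, Z, Finset.sum_range_succ, Finset.sum_range_succ, Z]
    have e1 : i + 2 * N = i + (2 * N) := by ring
    have e2 : i + 2 * N + 1 = i + (2 * N + 1) := by ring
    rw [e1, e2]
    omega

lemma oddSum (o K : ℕ) (ho : o % 2 = 1) :
    ∑ t ∈ Finset.range (2 * K), g (o + 2 * t) = K := by
  induction K with
  | zero => simp
  | succ K ih =>
    have h : 2 * (K + 1) = (2 * K) + 1 + 1 := by ring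
    rw [h, Finset.sum_range_succ, Finset.sum_range_succ, ih]
    have hp := g_pair (o + 2 * (2 * K)) (by omega)
    rw [show o + 2 * (2 * K) + 2 = o + 2 * (2 * K + 1) from by ring] at hp
    omega

lemma Z_rec (i K : ℕ) (hi : 1 ≤ i) :
    Z i (2 * (2 * K)) = Z ((i + 1) / 2) (2 * K) + K := by
  rw [Z_two_mul, Z]
  rcases Nat.even_or_odd i with he | ho
  · obtain ⟨m, hm⟩ := he
    have key : ∀ t ∈ Finset.range (2 * K),
        g (i + 2 * t) + g (i + 2 * t + 1) = g ((i + 1) / 2 + t) + g ((i + 1) + 2 * t) := by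
      intro t _
      rw [show i + 2 * t + 1 = (i + 1) + 2 * t from by ring,
          show i + 2 * t = 2 * (m + t) from by omega,
          g_two_mul _ (by omega),
          show (i + 1) / 2 + t = m + t from by omega]
    rw [Finset.sum_congr rfl key, Finset.sum_add_distrib, oddSum (i + 1) K (by omega)]
  · obtain ⟨m, hm⟩ := ho
    have key : ∀ t ∈ Finset.range (2 * K),
        g (i + 2 * t) + g (i + 2 * t + 1) = g ((i + 1) / 2 + t) + g (i + 2 * t) := by
      intro t _
      rw [show i + 2 * t + 1 = 2 * ((m + 1) + t) from by omega,
          g_two_mul _ (by omega),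
          show (i + 1) / 2 + t = (m + 1) + t from by omega]
      omega
    rw [Finset.sum_congr rfl key, Finset.sum_add_distrib, oddSum i K (by omega)]

lemma Z_bounds : ∀ n, 1 ≤ n → ∀ i, 1 ≤ i →
    2 ^ (n - 1) ≤ Z i (2 ^ n) + 1 ∧ Z i (2 ^ n) ≤ 2 ^ (n - 1) + 1 := by
  intro n
  induction n with
  | zero => omega
  | succ n ih =>
    intro _ i hi
    simp only [Nat.add_sub_cancel]
    rcases Nat.eq_zero_or_pos n with rfl | hn
    · have hz : Z i 2 = g i + g (i + 1) := by
        simp [Z, Finset.sum_range_succ]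
      have g1 := g_le_one i
      have g2 := g_le_one (i + 1)
      norm_num
      omega
    · have h2 : (2 : ℕ) * 2 ^ (n - 1) = 2 ^ n := by
        rw [← pow_succ']; congr 1; omega
      have hK : 2 ^ (n + 1) = 2 * (2 * 2 ^ (n - 1)) := by
        rw [h2, ← pow_succ']
      have hrec : Z i (2 ^ (n + 1)) = Z ((i + 1) / 2) (2 ^ n) + 2 ^ (n - 1) := by
        rw [hK, Z_rec i _ hi, h2]
      have hih := ih hn ((i + 1) / 2) (by omega)
      omega

lemma count_factorAt (w : ℕ → ℕ) (i N a : ℕ) :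
    (factorAt w i N).count a = ∑ j ∈ Finset.range N, (if w (i + j) = a then 1 else 0) := by
  induction N with
  | zero => simp [factorAt]
  | succ N ih =>
    rw [Finset.sum_range_succ, ← ih, factorAt, List.range_succ, List.map_append,
        List.count_append, factorAt]
    simp [List.count_cons]

lemma pf_cases (x : ℕ) : pf x = 0 ∨ pf x = 1 := by unfold pf; split <;> simp

/-- For `n ≥ 2`, the Parikh vectors `(2^(n-1) ± 2, 2^(n-1) ∓ 2)` do not occur among
factors of length `2^n` of the paperfolding word. -/
theorem paperfolding_missing_parikh_vectors (n : ℕ) (hn : 2 ≤ n) :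
    ¬ ∃ u : List ℕ, IsFactor pf u ∧ u.length = 2 ^ n ∧
      ((u.count 0, u.count 1) = (2 ^ (n - 1) + 2, 2 ^ (n - 1) - 2) ∨
       (u.count 0, u.count 1) = (2 ^ (n - 1) - 2, 2 ^ (n - 1) + 2)) := by
  rintro ⟨u, ⟨i, hi, hu⟩, hlen, hor⟩
  rw [hlen] at hu
  have hc0 : u.count 0 = Z i (2 ^ n) := by
    rw [hu, count_factorAt]; simp [Z, g]
  have hsum : u.count 0 + u.count 1 = 2 ^ n := by
    rw [hu, count_factorAt, count_factorAt, ← Finset.sum_add_distrib]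
    have key : ∀ j ∈ Finset.range (2 ^ n),
        ((if pf (i + j) = 0 then 1 else 0) + (if pf (i + j) = 1 then 1 else 0)) = 1 := by
      intro j _
      rcases pf_cases (i + j) with h | h <;> simp [h]
    rw [Finset.sum_congr rfl key]
    simp
  have hb := Z_bounds n (by omega) i hi
  have h2 : 2 ^ n = 2 * 2 ^ (n - 1) := by
    rw [← pow_succ']; congr 1; omega
  have h3 : 2 ≤ 2 ^ (n - 1) := by
    calc 2 = 2 ^ 1 := rfl
    _ ≤ 2 ^ (n - 1) := Nat.pow_le_pow_right (by norm_num) (by omega)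
  rcases hor with h | h <;> · simp only [Prod.mk.injEq] at h; omega
end

section
/- For the paperfolding word, the abelian complexity satisfies ρ(n) = M(n) + 1 for all n ≥ 1, where M(n) is the maximum of |u|_0 − |u|_1 over length-n factors u. -/
/-!
A length-`n` factor over `{0, 1}` is determined up to abelian equivalence by `|u|₀ - |u|₁`,
its sum of `±1` weights, so `ρ(n)` is the number of values of the window sums of the `±1`
version of the word. Sliding a window by one changes its sum by `-2`, `0` or `2`, so these
values form a progression of step `2` with no gaps. The folding symmetry
`pf (2 ^ (e + 1) - m) = 1 - pf m` for `0 < m < 2 ^ e` maps every window to one of opposite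
sum, so the progression is `{-M(n), …, M(n)}`, which has `M(n) + 1` elements.
-/

open Finset

/-- Such a set is `{-M, -M + 2, …, M}` with `M = sSup S`. -/
theorem Int.ncard_eq_sSup_add_one {S : Set ℤ} (hfin : S.Finite) (hne : S.Nonempty)
    (hneg : ∀ d ∈ S, -d ∈ S) (hpar : ∀ a ∈ S, ∀ b ∈ S, Even (a - b))
    (hfill : ∀ a ∈ S, ∀ b ∈ S, ∀ d, a ≤ d → d ≤ b → Even (d - a) → d ∈ S) :
    (S.ncard : ℤ) = sSup S + 1 := by
  have hM : sSup S ∈ S := hne.csSup_mem hfin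
  have hle : ∀ d ∈ S, d ≤ sSup S := fun d hd => le_csSup hfin.bddAbove hd
  generalize sSup S = M at hM hle ⊢
  have hM0 : 0 ≤ M := by linarith [hle _ (hneg M hM)]
  have hS : S = ((Finset.range (M.toNat + 1)).image fun k : ℕ => M - 2 * k : Finset ℤ) := by
    ext d
    simp only [coe_image, coe_range, Set.mem_image, Set.mem_Iio]
    constructor
    · intro hd
      obtain ⟨c, hc⟩ := hpar M hM d hd
      have := hle d hd
      have := hle _ (hneg d hd)
      exact ⟨c.toNat, by omega, by omega⟩
    · rintro ⟨k, hk, rfl⟩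
      exact hfill (-M) (hneg M hM) M hM _ (by omega) (by omega) ⟨M - k, by omega⟩
  rw [hS, Set.ncard_coe_finset, card_image_of_injective _ (fun a b h => by simpa using h),
    card_range]
  omega

/-- Discrete intermediate value theorem for walks with steps in `{-2, 0, 2}`. -/
theorem mem_range_of_le_of_le {h : ℕ → ℤ} (hstep : ∀ i, |h (i + 1) - h i| ≤ 2)
    (hpar : ∀ a b, Even (h a - h b)) {a b : ℕ} {d : ℤ} (ha : h a ≤ d) (hb : d ≤ h b)
    (hd : Even (d - h a)) : d ∈ Set.range h := by
  wlog hab : a ≤ b generalizing h a b d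
  · obtain ⟨c, hc⟩ := this (h := fun i => -h i) (a := b) (b := a) (d := -d)
      (fun i => by rw [← abs_neg]; convert hstep i using 2; ring)
      (fun x y => by convert hpar y x using 1; ring) (by linarith) (by linarith)
      (by rw [show -d - -h b = -(d - h a - (h b - h a)) by ring]; exact (hd.sub (hpar b a)).neg)
      (by omega)
    exact ⟨c, by linarith⟩
  induction b, hab using Nat.le_induction with
  | base => exact ⟨a, le_antisymm ha hb⟩
  | succ b hab ih =>
    by_cases hdb : d ≤ h b
    · exact ih hdb
    · obtain ⟨c₁, hc₁⟩ := hd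
      obtain ⟨c₂, hc₂⟩ := hpar (b + 1) a
      exact ⟨b + 1, by have := abs_le.1 (hstep b); omega⟩

def windowSum (f : ℕ → ℤ) (n i : ℕ) : ℤ := ∑ j ∈ range n, f (i + j)

section SignSequence

variable {f : ℕ → ℤ}

theorem windowSum_succ_sub (n i : ℕ) :
    windowSum f n (i + 1) - windowSum f n i = f (i + n) - f i := by
  have h := sum_range_succ' (fun j => f (i + j)) n
  rw [sum_range_succ] at h
  simp only [windowSum, add_zero, ← add_assoc, add_right_comm _ 1] at h ⊢
  linarith

theorem abs_windowSum_le (hf : ∀ m, f m = 1 ∨ f m = -1) (n i : ℕ) :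
    |windowSum f n i| ≤ n := by
  have habs : ∀ m, |f m| = 1 := fun m => by rcases hf m with h | h <;> simp [h]
  calc |windowSum f n i| ≤ ∑ j ∈ range n, |f (i + j)| := abs_sum_le_sum_abs _ _
    _ = n := by simp [habs]

theorem abs_windowSum_succ_sub_le (hf : ∀ m, f m = 1 ∨ f m = -1) (n i : ℕ) :
    |windowSum f n (i + 1) - windowSum f n i| ≤ 2 := by
  rw [windowSum_succ_sub]
  rcases hf (i + n) with h | h <;> rcases hf i with h' | h' <;> norm_num [h, h']

theorem even_windowSum_sub_self (hf : ∀ m, f m = 1 ∨ f m = -1) (n i : ℕ) :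
    Even (windowSum f n i - n) := by
  induction n with
  | zero => simp [windowSum]
  | succ n ih =>
    obtain ⟨c, hc⟩ := ih
    simp only [windowSum, sum_range_succ] at hc ⊢
    rcases hf (i + n) with h | h <;> rw [h] <;> push_cast
    · exact ⟨c, by linarith⟩
    · exact ⟨c - 1, by linarith⟩

theorem even_windowSum_sub (hf : ∀ m, f m = 1 ∨ f m = -1) (n a b : ℕ) :
    Even (windowSum f n a - windowSum f n b) := by
  simpa using (even_windowSum_sub_self hf n a).sub (even_windowSum_sub_self hf n b)

end SignSequence

theorem pf_two_pow_mul {j k : ℕ} (hk : Odd k) :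
    pf (2 ^ j * k) = if k % 4 = 1 then 0 else 1 := by
  have hv : padicValNat 2 (2 ^ j * k) = j := by
    rw [padicValNat.mul (by positivity) hk.pos.ne', padicValNat.prime_pow,
      padicValNat.eq_zero_of_not_dvd hk.not_two_dvd_nat, add_zero]
  rw [pf, hv, Nat.mul_div_cancel_left _ (by positivity)]

theorem pf_le_one (m : ℕ) : pf m ≤ 1 := by
  unfold pf; split <;> simp

/-- Folding symmetry of the paperfolding word. -/
theorem pf_two_pow_succ_sub {e m : ℕ} (hm0 : 0 < m) (hm : m < 2 ^ e) :
    pf (2 ^ (e + 1) - m) = 1 - pf m := by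
  obtain ⟨j, k, hk, rfl⟩ := Nat.exists_eq_two_pow_mul_odd hm0.ne'
  obtain ⟨t, rfl⟩ : ∃ t, e = j + t + 1 := by
    have := (Nat.le_mul_of_pos_right (2 ^ j) hk.pos).trans_lt hm
    exact ⟨e - j - 1, by have := (Nat.pow_lt_pow_iff_right one_lt_two).1 this; omega⟩
  have hpow : ∀ s, 2 ^ (j + t + s) = 2 ^ j * (2 ^ s * 2 ^ t) := fun s => by ring
  rw [hpow 1, pow_one, Nat.mul_lt_mul_left (by positivity)] at hm
  have hk' : Odd (2 ^ 2 * 2 ^ t - k) := by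
    rw [Nat.odd_iff] at hk ⊢; omega
  rw [show j + t + 1 + 1 = j + t + 2 by ring, hpow 2, ← Nat.mul_sub, pf_two_pow_mul hk,
    pf_two_pow_mul hk']
  rw [Nat.odd_iff] at hk
  split_ifs <;> omega

def pfSign (m : ℕ) : ℤ := 1 - 2 * pf m

theorem pfSign_eq_one_or_eq_neg_one (m : ℕ) : pfSign m = 1 ∨ pfSign m = -1 := by
  rcases Nat.le_one_iff_eq_zero_or_eq_one.1 (pf_le_one m) with h | h <;> simp [pfSign, h]

theorem pfSign_two_pow_succ_sub {e m : ℕ} (hm0 : 0 < m) (hm : m < 2 ^ e) :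
    pfSign (2 ^ (e + 1) - m) = -pfSign m := by
  have := pf_le_one m
  rw [pfSign, pfSign, pf_two_pow_succ_sub hm0 hm]
  push_cast [this]
  ring

/-- Reading a window backwards inside the first `2 ^ e` letters and folding it across `2 ^ e`
negates its sum. -/
theorem exists_windowSum_pfSign_eq_neg (n : ℕ) {i : ℕ} (hi : 1 ≤ i) :
    ∃ i' ≥ 1, windowSum pfSign n i' = -windowSum pfSign n i := by
  have hlt : i + n - 1 < 2 ^ (i + n) := by have := Nat.lt_two_pow_self (n := i + n); omega
  have hpow : 2 ^ (i + n + 1) = 2 * 2 ^ (i + n) := by ring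
  refine ⟨2 ^ (i + n + 1) - (i + n - 1), by omega, ?_⟩
  calc windowSum pfSign n (2 ^ (i + n + 1) - (i + n - 1))
      = ∑ j ∈ Finset.range n, -pfSign (i + (n - 1 - j)) := by
        refine sum_congr rfl fun j hj => ?_
        rw [mem_range] at hj
        rw [← pfSign_two_pow_succ_sub (e := i + n) (by omega) (by omega)]
        congr 1
        omega
    _ = -windowSum pfSign n i := by
        rw [sum_neg_distrib, sum_range_reflect (fun j => pfSign (i + j)) n, windowSum]

theorem ncard_range_windowSum_pfSign (n : ℕ) :
    ((Set.range fun i => windowSum pfSign n (i + 1)).ncard : ℤ) =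
      sSup (Set.range fun i => windowSum pfSign n (i + 1)) + 1 := by
  have hf := pfSign_eq_one_or_eq_neg_one
  apply Int.ncard_eq_sSup_add_one
  · refine (Set.finite_Icc (-(n : ℤ)) n).subset (Set.range_subset_iff.2 fun i => ?_)
    exact Set.mem_Icc.2 (abs_le.1 (abs_windowSum_le hf n _))
  · exact Set.range_nonempty _
  · rintro _ ⟨i, rfl⟩
    obtain ⟨i', hi', h⟩ := exists_windowSum_pfSign_eq_neg n (Nat.le_add_left 1 i)
    exact ⟨i' - 1, by simpa only [Nat.sub_add_cancel hi'] using h⟩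
  · rintro _ ⟨a, rfl⟩ _ ⟨b, rfl⟩
    exact even_windowSum_sub hf n _ _
  · rintro _ ⟨a, rfl⟩ _ ⟨b, rfl⟩ d ha hb hd
    exact mem_range_of_le_of_le (h := fun i => windowSum pfSign n (i + 1))
      (fun i => abs_windowSum_succ_sub_le hf n _) (fun _ _ => even_windowSum_sub hf n _ _) ha hb hd

section BinaryList

variable {l : List ℕ}

theorem count_zero_add_count_one (h : ∀ x ∈ l, x ≤ 1) : l.count 0 + l.count 1 = l.length := by
  induction l with
  | nil => rfl
  | cons a t ih =>
    have := h a List.mem_cons_self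
    have := ih fun x hx => h x (List.mem_cons_of_mem a hx)
    interval_cases a <;> simp <;> omega

theorem count_zero_sub_count_one (h : ∀ x ∈ l, x ≤ 1) :
    (l.count 0 : ℤ) - l.count 1 = (l.map fun a : ℕ => 1 - 2 * (a : ℤ)).sum := by
  induction l with
  | nil => rfl
  | cons a t ih =>
    have := h a List.mem_cons_self
    have := ih fun x hx => h x (List.mem_cons_of_mem a hx)
    interval_cases a <;> simp <;> omega

end BinaryList

theorem ncard_image_parikh_eq {L : Set (List ℕ)} {n : ℕ}
    (hL : ∀ u ∈ L, u.length = n ∧ ∀ x ∈ u, x ≤ 1) :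
    ((fun u => (u.count 0, u.count 1)) '' L).ncard =
      ((fun u => (u.count 0 : ℤ) - u.count 1) '' L).ncard := by
  rw [← Set.image_image (fun p : ℕ × ℕ => (p.1 : ℤ) - p.2)
    (fun u => (u.count 0, u.count 1)) L]
  refine (Set.InjOn.ncard_image ?_).symm
  rintro _ ⟨u, hu, rfl⟩ _ ⟨v, hv, rfl⟩ huv
  obtain ⟨hu_len, hu_bin⟩ := hL u hu
  obtain ⟨hv_len, hv_bin⟩ := hL v hv
  have hu' := count_zero_add_count_one hu_bin
  have hv' := count_zero_add_count_one hv_bin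
  dsimp only at huv ⊢
  rw [Prod.mk.injEq]
  omega

theorem le_one_of_mem_factorAt_pf {i n x : ℕ} (hx : x ∈ factorAt pf i n) : x ≤ 1 := by
  obtain ⟨j, -, rfl⟩ := List.mem_map.1 hx
  exact pf_le_one _

theorem factorAt_length (w : ℕ → ℕ) (i n : ℕ) : (factorAt w i n).length = n := by
  simp [factorAt]

theorem count_zero_sub_count_one_factorAt_pf (i n : ℕ) :
    ((factorAt pf i n).count 0 : ℤ) - (factorAt pf i n).count 1 = windowSum pfSign n i := by
  rw [count_zero_sub_count_one fun _ => le_one_of_mem_factorAt_pf, factorAt, List.map_map]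
  rfl

theorem image_factor_count_sub_eq_range (n : ℕ) :
    (fun u => (u.count 0 : ℤ) - u.count 1) '' {u | IsFactor pf u ∧ u.length = n} =
      Set.range fun i => windowSum pfSign n (i + 1) := by
  ext d
  constructor
  · rintro ⟨u, ⟨⟨i, hi, hu⟩, rfl⟩, rfl⟩
    refine ⟨i - 1, ?_⟩
    dsimp only
    rw [Nat.sub_add_cancel hi, hu, count_zero_sub_count_one_factorAt_pf, factorAt_length]
  · rintro ⟨i, rfl⟩
    exact ⟨factorAt pf (i + 1) n, ⟨⟨i + 1, by omega, by rw [factorAt_length]⟩,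
      factorAt_length _ _ _⟩, count_zero_sub_count_one_factorAt_pf _ _⟩

theorem paperfolding_rho_eq_M_add_one_general (n : ℕ) :
    ({p : ℕ × ℕ | ∃ u : List ℕ, IsFactor pf u ∧ u.length = n ∧
        p = (u.count 0, u.count 1)}.ncard : ℤ)
      = sSup {d : ℤ | ∃ u : List ℕ, IsFactor pf u ∧ u.length = n ∧
          d = (u.count 0 : ℤ) - (u.count 1 : ℤ)} + 1 := by
  set L := {u | IsFactor pf u ∧ u.length = n}
  have hL : ∀ u ∈ L, u.length = n ∧ ∀ x ∈ u, x ≤ 1 := by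
    rintro u ⟨⟨i, -, hu⟩, hn⟩
    exact ⟨hn, fun x hx => le_one_of_mem_factorAt_pf (hu ▸ hx)⟩
  have hP : {p : ℕ × ℕ | ∃ u : List ℕ, IsFactor pf u ∧ u.length = n ∧
      p = (u.count 0, u.count 1)} = (fun u => (u.count 0, u.count 1)) '' L := by
    ext; simp [L, eq_comm, and_assoc]
  have hD : {d : ℤ | ∃ u : List ℕ, IsFactor pf u ∧ u.length = n ∧
      d = (u.count 0 : ℤ) - (u.count 1 : ℤ)} =
        (fun u => (u.count 0 : ℤ) - u.count 1) '' L := by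
    ext; simp [L, eq_comm, and_assoc]
  rw [hP, hD, ncard_image_parikh_eq hL, image_factor_count_sub_eq_range]
  exact ncard_range_windowSum_pfSign n

/-- For the paperfolding word, the abelian complexity `ρ(n)` equals `M(n) + 1`, where
`M(n)` is the maximum of `|u|₀ - |u|₁` over length-`n` factors `u`. -/
theorem paperfolding_rho_eq_M_add_one (n : ℕ) (hn : 1 ≤ n) :
    ({p : ℕ × ℕ | ∃ u : List ℕ, IsFactor pf u ∧ u.length = n ∧
        p = (u.count 0, u.count 1)}.ncard : ℤ)
      = sSup {d : ℤ | ∃ u : List ℕ, IsFactor pf u ∧ u.length = n ∧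
          d = (u.count 0 : ℤ) - (u.count 1 : ℤ)} + 1 :=
  paperfolding_rho_eq_M_add_one_general n
end
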